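/- For every ε ∈ (0, π) there exist constants C, δ > 0, depending only on ε, such that |E(s, y)| = |exp(−y s) − exp(−y √(λ + s²))| ≤ C √|λ| · y · e^{−δ s y} for all λ ∈ Σ_ε and all real s, y ≥ 0. -/

import Mathlib

open MeasureTheory Real

/-- Principal complex square root `√z = z^(1/2)` (principal branch of `cpow`). -/
noncomputable def csqrt (z : ℂ) : ℂ := z ^ (1/2 : ℂ)

/-- The sector `Σ_ε = {λ ∈ ℂ : λ ≠ 0, |Arg λ| < π − ε}`. -/
def SigmaSector (ε : ℝ) : Set ℂ := {l : ℂ | l ≠ 0 ∧ |l.arg| < Real.pi - ε}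

/-- Mikhlin condition (M) with constant `cbar`, with `K = ⌊(d+1)/2⌋`. -/
def CondM (d : ℕ) (m : EuclideanSpace ℝ (Fin (d-1)) → ℂ) (cbar : ℝ) : Prop :=
  ContDiffOn ℝ ((d+1)/2 : ℕ) m {ξ : EuclideanSpace ℝ (Fin (d-1)) | ξ ≠ 0} ∧
  ∀ k : ℕ, k ≤ (d+1)/2 → ∀ ξ : EuclideanSpace ℝ (Fin (d-1)), ξ ≠ 0 →
    ‖ξ‖ ^ k * ‖iteratedFDerivWithin ℝ k m
        {ξ : EuclideanSpace ℝ (Fin (d-1)) | ξ ≠ 0} ξ‖ ≤ cbar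

/-- Parameterized Mikhlin condition (M*) with constants `(cbar, δ)`, `K = ⌊(d+1)/2⌋`. -/
def CondMStar (d : ℕ) (m : EuclideanSpace ℝ (Fin (d-1)) → ℝ → ℂ) (cbar δ : ℝ) : Prop :=
  (∀ y : ℝ, 0 ≤ y →
    ContDiffOn ℝ ((d+1)/2 : ℕ) (fun ξ => m ξ y)
      {ξ : EuclideanSpace ℝ (Fin (d-1)) | ξ ≠ 0}) ∧
  ∀ k : ℕ, k ≤ (d+1)/2 →
    ∀ ξ : EuclideanSpace ℝ (Fin (d-1)), ξ ≠ 0 → ∀ y : ℝ, 0 ≤ y →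
      ‖ξ‖ ^ k * ‖iteratedFDerivWithin ℝ k (fun ξ => m ξ y)
          {ξ : EuclideanSpace ℝ (Fin (d-1)) | ξ ≠ 0} ξ‖ ≤
        cbar * Real.exp (-δ * ‖ξ‖ * y) / (1 + y)

/-- The fundamental multiplier `m₀(s, y)`. -/
noncomputable def m0 (l : ℂ) (α : ℝ) (s y : ℝ) : ℂ :=
  ((csqrt (l + (s:ℂ)^2) + s) / ((α:ℂ) + l + csqrt (l + (s:ℂ)^2) + s)) *
    ((Complex.exp (-(y:ℂ) * csqrt (l + (s:ℂ)^2)) - Complex.exp (-(y:ℂ) * s)) / l)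

/-- `E(s, y) = e^{-ys} - e^{-y√(λ+s²)}`. -/
noncomputable def Efun (l : ℂ) (s y : ℝ) : ℂ :=
  Complex.exp (-(y:ℂ) * s) - Complex.exp (-(y:ℂ) * csqrt (l + (s:ℂ)^2))

/-! Write `q = √(λ + s²)`. Since `q² - s² = λ` and `Re q ≥ 0`, we have `|q - s| ≤ |q + s|`, hence
`|q - s|² ≤ |q - s| |q + s| = |λ|`. By the mean value theorem `|E(s, y)| ≤ y |q - s| e^{-y r}`
whenever `s` and `Re q` are both at least `r`. Finally `2 (Re q)² = |λ + s²| + Re λ + s²`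
dominates both `|λ| + Re λ ≥ (1 - cos ε) |λ|` (this is where the sector enters) and
`2 s² - 2 |λ|`, and a positive combination of the two gives `Re q ≥ (1 - cos ε) s / 4`; so `C = 1` and
`δ = (1 - cos ε) / 4` work. -/

theorem Complex.norm_exp_sub_exp_le_of_re_le {a b : ℂ} {r : ℝ} (ha : a.re ≤ r) (hb : b.re ≤ r) :
    ‖Complex.exp a - Complex.exp b‖ ≤ Real.exp r * ‖a - b‖ :=
  (convex_halfSpace_re_le r).norm_image_sub_le_of_norm_hasDerivWithin_le
    (fun z _ => (Complex.hasDerivAt_exp z).hasDerivWithinAt)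
    (fun z hz => by rw [Complex.norm_exp]; exact Real.exp_le_exp.2 hz) hb ha

theorem Complex.norm_sub_ofReal_le_norm_add_ofReal {q : ℂ} (hq : 0 ≤ q.re) {s : ℝ} (hs : 0 ≤ s) :
    ‖q - s‖ ≤ ‖q + s‖ := by
  rw [← sq_le_sq₀ (norm_nonneg _) (norm_nonneg _), Complex.sq_norm, Complex.sq_norm,
    Complex.normSq_apply, Complex.normSq_apply]
  simp only [Complex.sub_re, Complex.add_re, Complex.sub_im, Complex.add_im, Complex.ofReal_re,
    Complex.ofReal_im, sub_zero, add_zero]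
  nlinarith [mul_nonneg hq hs]

theorem csqrt_sq (z : ℂ) : csqrt z ^ 2 = z := by
  simp [csqrt]

theorem re_csqrt (z : ℂ) : (csqrt z).re = √((‖z‖ + z.re) / 2) := by
  rw [csqrt, one_div]
  exact Complex.cpow_inv_two_re z

theorem re_csqrt_nonneg (z : ℂ) : 0 ≤ (csqrt z).re :=
  re_csqrt z ▸ Real.sqrt_nonneg _

theorem norm_csqrt_add_sq_sub_le (l : ℂ) {s : ℝ} (hs : 0 ≤ s) :
    ‖csqrt (l + s ^ 2) - s‖ ≤ √‖l‖ := by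
  set q := csqrt (l + s ^ 2)
  have hprod : ‖q - s‖ * ‖q + s‖ = ‖l‖ := by
    rw [← norm_mul, show (q - s) * (q + s) = q ^ 2 - (s : ℂ) ^ 2 by ring, csqrt_sq, add_sub_cancel_right]
  have hle := Complex.norm_sub_ofReal_le_norm_add_ofReal (re_csqrt_nonneg (l + s ^ 2)) hs
  apply Real.le_sqrt_of_sq_le
  nlinarith [norm_nonneg (q - s)]

theorem neg_cos_mul_norm_le_re_of_mem_sigmaSector {ε : ℝ} (hε : 0 ≤ ε) {l : ℂ}
    (hl : l ∈ SigmaSector ε) : -Real.cos ε * ‖l‖ ≤ l.re := by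
  rw [← Complex.norm_mul_cos_arg, ← Real.cos_pi_sub, ← Real.cos_abs l.arg, mul_comm]
  gcongr
  exact Real.cos_le_cos_of_nonneg_of_le_pi (abs_nonneg _) (by linarith) hl.2.le

theorem mul_le_re_csqrt_add_sq {ε : ℝ} {l : ℂ} (hl : -Real.cos ε * ‖l‖ ≤ l.re) (s : ℝ) :
    (1 - Real.cos ε) / 4 * s ≤ (csqrt (l + s ^ 2)).re := by
  rw [re_csqrt]
  apply Real.le_sqrt_of_sq_le
  set κ := 1 - Real.cos ε
  set z := l + (s : ℂ) ^ 2
  have hκ0 : 0 ≤ κ := by linarith [Real.cos_le_one ε]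
  have hκ2 : κ ≤ 2 := by linarith [Real.neg_one_le_cos ε]
  have hre : z.re = l.re + s ^ 2 := by simp [z, ← Complex.ofReal_pow]
  have hnorm : ‖l‖ - s ^ 2 ≤ ‖z‖ := by
    have := norm_sub_le z ((s : ℂ) ^ 2)
    rw [add_sub_cancel_right, norm_pow, Complex.norm_real, Real.norm_eq_abs, sq_abs] at this
    linarith
  have hz : κ * s ^ 2 ≤ 2 * (‖z‖ + z.re) := by
    nlinarith [Complex.re_le_norm z, neg_abs_le l.re, Complex.abs_re_le_norm l]
  nlinarith

theorem norm_Efun_le {l : ℂ} {s y δ : ℝ} (hs : 0 ≤ s) (hy : 0 ≤ y) (hδ : δ ≤ 1)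
    (hδq : δ * s ≤ (csqrt (l + s ^ 2)).re) :
    ‖Efun l s y‖ ≤ √‖l‖ * y * Real.exp (-δ * s * y) := by
  set q := csqrt (l + s ^ 2)
  have hre_s : (-(y : ℂ) * s).re ≤ -δ * s * y := by
    simp only [← Complex.ofReal_neg, ← Complex.ofReal_mul, Complex.ofReal_re]
    nlinarith [mul_nonneg hs hy]
  have hre_q : (-(y : ℂ) * q).re ≤ -δ * s * y := by
    rw [← Complex.ofReal_neg, Complex.re_ofReal_mul]
    nlinarith
  calc ‖Efun l s y‖ ≤ Real.exp (-δ * s * y) * ‖-(y : ℂ) * s - -(y : ℂ) * q‖ :=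
        Complex.norm_exp_sub_exp_le_of_re_le hre_s hre_q
    _ = Real.exp (-δ * s * y) * (y * ‖q - s‖) := by
        rw [show -(y : ℂ) * s - -(y : ℂ) * q = y * (q - s) by ring, norm_mul, Complex.norm_real,
          Real.norm_of_nonneg hy]
    _ ≤ Real.exp (-δ * s * y) * (y * √‖l‖) := by
        gcongr
        exact norm_csqrt_add_sq_sub_le l hs
    _ = √‖l‖ * y * Real.exp (-δ * s * y) := by ring

/-- `|E(s,y)| ≤ C √|λ| y e^{-δ s y}` on the sector. -/
theorem stmt_9 (ε : ℝ) (hε : ε ∈ Set.Ioo 0 Real.pi) :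
    ∃ C δ : ℝ, 0 < C ∧ 0 < δ ∧ ∀ l ∈ SigmaSector ε, ∀ s y : ℝ, 0 ≤ s → 0 ≤ y →
      ‖Efun l s y‖ ≤
        C * Real.sqrt ‖l‖ * y * Real.exp (-δ * s * y) := by
  have hcos : Real.cos ε < 1 := by
    simpa using Real.cos_lt_cos_of_nonneg_of_le_pi le_rfl hε.2.le hε.1
  refine ⟨1, (1 - Real.cos ε) / 4, one_pos, by linarith, fun l hl s y hs hy => ?_⟩
  rw [one_mul]
  refine norm_Efun_le hs hy (by linarith [Real.neg_one_le_cos ε]) ?_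
  exact mul_le_re_csqrt_add_sq (neg_cos_mul_norm_le_re_of_mem_sigmaSector hε.1.le hl) s
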